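/- arXiv:1608.00413 — 3 statements merged into one kernel-verified Lean document; each statement's English description precedes it below -/
import Mathlib

section
/- Let 0 < α < 1. Then the sequence S^k = α^k · Σ_{p=1}^{k} α^{-p}/p converges to zero at rate O(1/k), i.e., there exists a constant C > 0 and an integer K such that for all k ≥ K, S^k ≤ C/k. -/
/-- Lemma 3 (second part): for `0 < α < 1`, the sequence
`S^k = α^k · Σ_{p=1}^{k} α^{-p}/p` converges to zero at rate `O(1/k)`:
there exist `C > 0` and `K` such that `S^k ≤ C / k` for all `k ≥ K`. -/
theorem stmt_1 (α : ℝ) (hα0 : 0 < α) (hα1 : α < 1) :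
    ∃ C : ℝ, 0 < C ∧ ∃ K : ℕ, ∀ k : ℕ, K ≤ k →
      α ^ k * ∑ p ∈ Finset.Icc 1 k, α ^ (-(p : ℤ)) / (p : ℝ) ≤ C / (k : ℝ) := by
  have hαne : α ≠ 0 := ne_of_gt hα0
  set S : ℕ → ℝ := fun k => α ^ k * ∑ p ∈ Finset.Icc 1 k, α ^ (-(p : ℤ)) / (p : ℝ) with hSdef
  have hrec : ∀ k : ℕ, S (k + 1) = α * S k + 1 / ((k : ℝ) + 1) := by
    intro k
    have h1 : (1 : ℕ) ≤ k + 1 := Nat.succ_le_succ (Nat.zero_le k)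
    have hone : α ^ (k + 1) * α ^ (-(↑(k + 1) : ℤ)) = 1 := by
      rw [← zpow_natCast α (k + 1), ← zpow_add₀ hαne, add_neg_cancel, zpow_zero]
    simp only [hSdef]
    rw [Finset.sum_Icc_succ_top h1, mul_add, ← mul_div_assoc, hone, pow_succ]
    push_cast
    ring
  set β : ℝ := 1 - α with hβdef
  have hβ : 0 < β := by simp [hβdef]; linarith
  set K : ℕ := ⌈2 / β⌉₊ + 1 with hKdef
  have hK1 : 1 ≤ K := Nat.le_add_left 1 _
  have hKge : 2 / β ≤ (K : ℝ) := by
    have := Nat.le_ceil (2 / β)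
    push_cast [hKdef]
    linarith
  set C : ℝ := max (2 / β) ((K : ℝ) * S K + 1) with hCdef
  have hC2 : 2 / β ≤ C := le_max_left _ _
  have hCpos : 0 < C := lt_of_lt_of_le (by positivity) hC2
  refine ⟨C, hCpos, K, ?_⟩
  intro k hk
  induction k, hk using Nat.le_induction with
  | base =>
      have hKpos : (0 : ℝ) < (K : ℝ) := by exact_mod_cast hK1
      show S K ≤ C / (K : ℝ)
      rw [le_div_iff₀ hKpos]
      have : (K : ℝ) * S K + 1 ≤ C := le_max_right _ _
      nlinarith [this]
  | succ k hk ih =>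
      have hkpos : (0 : ℝ) < (k : ℝ) := by
        have : 1 ≤ k := le_trans hK1 hk
        exact_mod_cast this
      have hk1pos : (0 : ℝ) < (k : ℝ) + 1 := by linarith
      have hkβ : 2 ≤ (k : ℝ) * β := by
        have hkK : (K : ℝ) ≤ (k : ℝ) := by exact_mod_cast hk
        have : 2 / β ≤ (k : ℝ) := le_trans hKge hkK
        calc (2 : ℝ) = 2 / β * β := by field_simp
        _ ≤ (k : ℝ) * β := by nlinarith
      have hkey : (k : ℝ) ≤ C * ((k : ℝ) * β - α) := by
        have h1 : (k : ℝ) * β / 2 ≤ (k : ℝ) * β - α := by nlinarith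
        have h2 : (2 / β) * ((k : ℝ) * β / 2) = (k : ℝ) := by field_simp
        have h3 : (2 / β) * ((k : ℝ) * β / 2) ≤ C * ((k : ℝ) * β - α) :=
          mul_le_mul hC2 h1 (by nlinarith) (le_of_lt hCpos)
        rw [h2] at h3
        exact h3
      have ihk : S k ≤ C / (k : ℝ) := ih
      have hstep : α * S k ≤ α * (C / (k : ℝ)) :=
        mul_le_mul_of_nonneg_left ihk (le_of_lt hα0)
      have hgoal : α * (C / (k : ℝ)) + 1 / ((k : ℝ) + 1) ≤ C / ((k : ℝ) + 1) := by
        rw [← mul_div_assoc, div_add_div _ _ (ne_of_gt hkpos) (ne_of_gt hk1pos),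
          div_le_div_iff₀ (by positivity) hk1pos]
        have heq : (k : ℝ) * β - α = (k : ℝ) - α * ((k : ℝ) + 1) := by
          simp only [hβdef]; ring
        have h5 : α * C * ((k : ℝ) + 1) + (k : ℝ) ≤ C * (k : ℝ) := by
          nlinarith [hkey, heq]
        nlinarith [mul_le_mul_of_nonneg_right h5 (le_of_lt hk1pos)]
      have hfin : S (k + 1) ≤ C / ((k : ℝ) + 1) := by
        rw [hrec k]; linarith
      show S (k + 1) ≤ C / (((k + 1 : ℕ) : ℝ))
      rw [show ((k + 1 : ℕ) : ℝ) = (k : ℝ) + 1 from by push_cast; ring]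
      exact hfin
end

section
/- Let f : ℝ^n → ℝ be strongly convex with modulus σ and A ∈ ℝ^{m×n}. Then the function φ(λ) = f*(Aᵀλ) has Lipschitz continuous gradient with Lipschitz constant ρ(A)/σ, where ρ(A) is the largest eigenvalue of AᵀA (i.e., ‖A‖² in the spectral norm). -/
set_option maxHeartbeats 1000000

open scoped RealInnerProductSpace

section Aux

variable {E : Type*} [NormedAddCommGroup E] [InnerProductSpace ℝ E] [FiniteDimensional ℝ E]

lemma aux_f_cont {σ : ℝ} {f : E → ℝ} (hf : StrongConvexOn Set.univ σ f) : Continuous f := by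
  have hg : ConvexOn ℝ Set.univ (fun x => f x - σ/2 * ‖x‖^2) :=
    strongConvexOn_iff_convex.mp hf
  have hgc : Continuous (fun x => f x - σ/2 * ‖x‖^2) := by
    rw [← continuousOn_univ]
    exact hg.continuousOn isOpen_univ
  have : Continuous (fun x : E => (f x - σ/2 * ‖x‖^2) + σ/2 * ‖x‖^2) :=
    hgc.add (by continuity)
  simpa using this

lemma aux_f_lb {σ : ℝ} {f : E → ℝ} (hf : StrongConvexOn Set.univ σ f) :
    ∃ C : ℝ, 0 ≤ C ∧ ∀ x : E, σ/2 * ‖x‖^2 - C * (‖x‖ + 1) ≤ f x := by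
  set g : E → ℝ := fun x => f x - σ/2 * ‖x‖^2 with hgdef
  have hg : ConvexOn ℝ Set.univ g := strongConvexOn_iff_convex.mp hf
  have hgc : Continuous g := by
    rw [← continuousOn_univ]; exact hg.continuousOn isOpen_univ
  obtain ⟨z, -, hz⟩ := (isCompact_closedBall (0:E) 1).exists_isMinOn
    ⟨0, by simp⟩ hgc.continuousOn
  refine ⟨|g z| + |g 0|, by positivity, fun x => ?_⟩
  have key : -(|g z| + |g 0|) * (‖x‖ + 1) ≤ g x := by
    rcases le_or_gt ‖x‖ 1 with hx | hx
    · have h1 : g z ≤ g x := hz (by simpa [Metric.mem_closedBall, dist_eq_norm] using hx)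
      have h2 : -|g z| ≤ g z := neg_abs_le _
      have : (0:ℝ) ≤ ‖x‖ := norm_nonneg _
      nlinarith [abs_nonneg (g 0), abs_nonneg (g z), mul_nonneg (abs_nonneg (g 0)) (norm_nonneg x), mul_nonneg (abs_nonneg (g z)) (norm_nonneg x)]
    · have hx0 : (0:ℝ) < ‖x‖ := lt_trans one_pos hx
      set u : E := (1/‖x‖) • x with hu
      have hun : ‖u‖ = 1 := by
        rw [hu, norm_smul]; simp [abs_of_pos (one_div_pos.mpr hx0), hx0.ne']
      have ha : (0:ℝ) ≤ 1 - 1/‖x‖ := by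
        rw [sub_nonneg]; exact (div_le_one hx0).mpr hx.le
      have hcvx := hg.2 (Set.mem_univ (0:E)) (Set.mem_univ x) ha
        (by positivity : (0:ℝ) ≤ 1/‖x‖) (by ring)
      have hu' : (1 - 1/‖x‖) • (0:E) + (1/‖x‖) • x = u := by simp [hu]
      rw [hu'] at hcvx
      have hgz : g z ≤ g u := hz (by simp [Metric.mem_closedBall, dist_eq_norm, hun])
      simp only [smul_eq_mul] at hcvx
      have h3 : ‖x‖ * g u - (‖x‖ - 1) * g 0 ≤ g x := by
        have := mul_le_mul_of_nonneg_left hcvx hx0.le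
        field_simp at this ⊢
        nlinarith [this]
      have h4 : -|g z| ≤ g u := le_trans (neg_abs_le _) hgz
      nlinarith [neg_abs_le (g 0), le_abs_self (g 0), abs_nonneg (g 0), abs_nonneg (g z),
        mul_le_mul_of_nonneg_left h4 hx0.le, mul_nonneg (abs_nonneg (g z)) hx0.le,
        mul_nonneg (abs_nonneg (g 0)) hx0.le]
  simp only [hgdef] at key
  linarith [key]

lemma aux_exists_strong_max {σ : ℝ} (hσ : 0 < σ) {f : E → ℝ}
    (hf : StrongConvexOn Set.univ σ f) (hfc : Continuous f)
    (C : ℝ) (hC0 : 0 ≤ C) (hCb : ∀ x : E, σ/2 * ‖x‖^2 - C * (‖x‖ + 1) ≤ f x) :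
    ∃ X : E → E, ∀ y x, ⟪y, x⟫ - f x ≤ (⟪y, X y⟫ - f (X y)) - σ/2 * ‖x - X y‖^2 := by
  have hmax : ∀ y : E, ∃ w : E, ∀ x : E, ⟪y, x⟫ - f x ≤ ⟪y, w⟫ - f w := by
    intro y
    set c : ℝ := ⟪y, (0:E)⟫ - f 0 with hc
    set R : ℝ := max 1 (2 * (‖y‖ + C + C + |c| + 1) / σ) with hR
    have hR1 : 1 ≤ R := le_max_left _ _
    have hR2 : 2 * (‖y‖ + C + C + |c| + 1) / σ ≤ R := le_max_right _ _
    have hcont : Continuous fun x : E => ⟪y, x⟫ - f x :=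
      (continuous_const.inner continuous_id).sub hfc
    obtain ⟨w, hwmem, hw⟩ := (isCompact_closedBall (0:E) R).exists_isMaxOn
      ⟨0, Metric.mem_closedBall_self (by linarith)⟩ hcont.continuousOn
    refine ⟨w, fun x => ?_⟩
    rcases le_or_gt ‖x‖ R with hx | hx
    · exact hw (by simpa [Metric.mem_closedBall, dist_eq_norm] using hx)
    · have h0w : c ≤ ⟪y, w⟫ - f w := hw (Metric.mem_closedBall_self (by linarith))
      have hfx := hCb x
      have hyx : ⟪y, x⟫ ≤ ‖y‖ * ‖x‖ := real_inner_le_norm y x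
      have h1x : 1 ≤ ‖x‖ := le_trans hR1 hx.le
      have h2 : ‖y‖ + C + C + |c| + 1 ≤ σ/2 * R := by
        rw [div_le_iff₀ hσ] at hR2; linarith
      have hxx : R * ‖x‖ ≤ ‖x‖ * ‖x‖ := mul_le_mul_of_nonneg_right hx.le (norm_nonneg x)
      have h5 := mul_le_mul_of_nonneg_left hxx (by positivity : (0:ℝ) ≤ σ/2)
      have h4 := mul_le_mul_of_nonneg_right h2 (norm_nonneg x)
      have h3 : (‖y‖ + C + C + |c| + 1) * ‖x‖ ≤ σ/2 * ‖x‖^2 := by nlinarith [h4, h5]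
      have hkey : ⟪y, x⟫ - f x < c := by
        nlinarith [neg_abs_le c, mul_le_mul_of_nonneg_left h1x hC0,
          mul_le_mul_of_nonneg_left h1x (abs_nonneg c)]
      linarith
  choose X hX using hmax
  refine ⟨X, fun y x => ?_⟩
  have hlim : Filter.Tendsto (fun t : ℝ => (⟪y, X y⟫ - f (X y)) - σ/2 * (1-t) * ‖x - X y‖^2)
      (nhdsWithin 0 (Set.Ioo 0 1)) (nhds ((⟪y, X y⟫ - f (X y)) - σ/2 * ‖x - X y‖^2)) := by
    have : Filter.Tendsto (fun t : ℝ => (⟪y, X y⟫ - f (X y)) - σ/2 * (1-t) * ‖x - X y‖^2)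
        (nhds 0) (nhds ((⟪y, X y⟫ - f (X y)) - σ/2 * (1-(0:ℝ)) * ‖x - X y‖^2)) := by
      apply Continuous.tendsto
      continuity
    simpa using this.mono_left nhdsWithin_le_nhds
  have hev : ∀ t ∈ Set.Ioo (0:ℝ) 1,
      ⟪y, x⟫ - f x ≤ (⟪y, X y⟫ - f (X y)) - σ/2 * (1-t) * ‖x - X y‖^2 := by
    rintro t ⟨ht0, ht1⟩
    have hconc := hf.2 (Set.mem_univ x) (Set.mem_univ (X y)) ht0.le
      (by linarith : (0:ℝ) ≤ 1 - t) (by ring)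
    simp only [smul_eq_mul] at hconc
    have hi : ⟪y, t•x + (1-t)•(X y)⟫ = t * ⟪y, x⟫ + (1-t) * ⟪y, X y⟫ := by
      rw [inner_add_right, real_inner_smul_right, real_inner_smul_right]
    have hle := hX y (t•x + (1-t)•(X y))
    rw [hi] at hle
    have h6 : t * ((⟪y, x⟫ - f x) + (1-t) * (σ/2 * ‖x - X y‖^2))
        ≤ t * (⟪y, X y⟫ - f (X y)) := by nlinarith [hle, hconc]
    have h7 := le_of_mul_le_mul_left h6 ht0
    nlinarith [h7]
  have hne : (nhdsWithin (0:ℝ) (Set.Ioo 0 1)).NeBot := by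
    apply mem_closure_iff_nhdsWithin_neBot.mp
    rw [closure_Ioo one_ne_zero.symm]
    exact ⟨le_refl 0, zero_le_one⟩
  exact ge_of_tendsto hlim (Filter.eventually_of_mem self_mem_nhdsWithin hev)

end Aux

section Aux2
variable {E : Type*} [NormedAddCommGroup E] [InnerProductSpace ℝ E]
variable {σ : ℝ} {f : E → ℝ} {X : E → E}

lemma aux_xle (hX : ∀ y x, ⟪y, x⟫ - f x ≤ (⟪y, X y⟫ - f (X y)) - σ/2 * ‖x - X y‖^2)
    (hσ : 0 < σ) :
    ∀ y x, ⟪y, x⟫ - f x ≤ ⟪y, X y⟫ - f (X y) := by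
  intro y x
  have := hX y x
  nlinarith [sq_nonneg ‖x - X y‖]

lemma aux_sup (hX : ∀ y x, ⟪y, x⟫ - f x ≤ (⟪y, X y⟫ - f (X y)) - σ/2 * ‖x - X y‖^2)
    (hσ : 0 < σ) (y : E) :
    (⨆ x, ⟪y, x⟫ - f x) = ⟪y, X y⟫ - f (X y) := by
  apply le_antisymm
  · exact ciSup_le fun x => aux_xle hX hσ y x
  · have hbdd : BddAbove (Set.range fun x => ⟪y, x⟫ - f x) :=
      ⟨⟪y, X y⟫ - f (X y), by rintro _ ⟨x, rfl⟩; exact aux_xle hX hσ y x⟩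
    exact le_ciSup hbdd (X y)

lemma aux_lip (hX : ∀ y x, ⟪y, x⟫ - f x ≤ (⟪y, X y⟫ - f (X y)) - σ/2 * ‖x - X y‖^2)
    (hσ : 0 < σ) (y z : E) : σ * ‖X z - X y‖ ≤ ‖z - y‖ := by
  have h1 := hX y (X z)
  have h2 := hX z (X y)
  have hd : ‖X y - X z‖ = ‖X z - X y‖ := norm_sub_rev _ _
  rw [hd] at h2
  have hsum : σ * ‖X z - X y‖^2 ≤ ⟪z - y, X z - X y⟫ := by
    have hiz : ⟪z - y, X z - X y⟫
        = (⟪z, X z⟫ - ⟪z, X y⟫) - (⟪y, X z⟫ - ⟪y, X y⟫) := by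
      rw [inner_sub_left, inner_sub_right, inner_sub_right]
    rw [hiz]; nlinarith [h1, h2]
  have hcs : ⟪z - y, X z - X y⟫ ≤ ‖z - y‖ * ‖X z - X y‖ := real_inner_le_norm _ _
  rcases eq_or_lt_of_le (norm_nonneg (X z - X y)) with hd0 | hd0
  · rw [← hd0]; simp [norm_nonneg]
  · have hmm : σ * ‖X z - X y‖ * ‖X z - X y‖ ≤ ‖z - y‖ * ‖X z - X y‖ := by
      nlinarith [hsum, hcs]
    exact le_of_mul_le_mul_right hmm hd0

lemma aux_low (hX : ∀ y x, ⟪y, x⟫ - f x ≤ (⟪y, X y⟫ - f (X y)) - σ/2 * ‖x - X y‖^2)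
    (hσ : 0 < σ) (y z : E) :
    0 ≤ (⟪z, X z⟫ - f (X z)) - (⟪y, X y⟫ - f (X y)) - ⟪z - y, X y⟫ := by
  have h1 := aux_xle hX hσ z (X y)
  have h2 : ⟪z, X y⟫ = ⟪y, X y⟫ + ⟪z - y, X y⟫ := by
    rw [inner_sub_left]; ring
  rw [h2] at h1
  linarith

lemma aux_up (hX : ∀ y x, ⟪y, x⟫ - f x ≤ (⟪y, X y⟫ - f (X y)) - σ/2 * ‖x - X y‖^2)
    (hσ : 0 < σ) (y z : E) :
    (⟪z, X z⟫ - f (X z)) - (⟪y, X y⟫ - f (X y)) - ⟪z - y, X y⟫ ≤ ‖z - y‖^2 / (2 * σ) := by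
  have h1 := hX y (X z)
  have h2 : ⟪z, X z⟫ = ⟪y, X z⟫ + ⟪z - y, X z⟫ := by
    rw [inner_sub_left]; ring
  have h3 : ⟪z - y, X z⟫ - ⟪z - y, X y⟫ = ⟪z - y, X z - X y⟫ := by
    rw [inner_sub_right]
  have hcs : ⟪z - y, X z - X y⟫ ≤ ‖z - y‖ * ‖X z - X y‖ := real_inner_le_norm _ _
  have key : (⟪z, X z⟫ - f (X z)) - (⟪y, X y⟫ - f (X y)) - ⟪z - y, X y⟫
      ≤ ‖z - y‖ * ‖X z - X y‖ - σ/2 * ‖X z - X y‖^2 := by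
    nlinarith [h1, hcs, h2, h3]
  have amgm : ‖z - y‖ * ‖X z - X y‖ - σ/2 * ‖X z - X y‖^2 ≤ ‖z - y‖^2 / (2 * σ) := by
    rw [le_div_iff₀ (by positivity : (0:ℝ) < 2 * σ)]
    nlinarith [sq_nonneg (σ * ‖X z - X y‖ - ‖z - y‖)]
  linarith

end Aux2

/-- If `f` is strongly convex with modulus `σ` and `A ∈ ℝ^{m×n}`, then
`φ(λ) = f*(Aᵀλ)` has Lipschitz continuous gradient with constant `ρ(A)/σ`,
where `ρ(A) = ‖A‖²` (spectral norm squared, the largest eigenvalue of `AᵀA`). -/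
theorem stmt_5 (n m : ℕ) (σ : ℝ) (hσ : 0 < σ)
    (f : EuclideanSpace ℝ (Fin n) → ℝ)
    (hf : StrongConvexOn Set.univ σ f)
    (A : Matrix (Fin m) (Fin n) ℝ) :
    ∃ g : EuclideanSpace ℝ (Fin m) → EuclideanSpace ℝ (Fin m),
      (∀ lam, HasGradientAt
          (fun lam' : EuclideanSpace ℝ (Fin m) =>
            ⨆ x, (⟪(WithLp.equiv 2 (Fin n → ℝ)).symm ((Matrix.transpose A).mulVec lam'), x⟫ - f x))
          (g lam) lam) ∧
      LipschitzWith
        (Real.toNNReal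
          (‖LinearMap.toContinuousLinearMap (Matrix.toEuclideanLin A)‖ ^ 2 / σ)) g := by
  classical
  obtain ⟨C, hC0, hCb⟩ := aux_f_lb hf
  obtain ⟨X, hX⟩ := aux_exists_strong_max hσ hf (aux_f_cont hf) C hC0 hCb
  obtain ⟨L, hL⟩ : ∃ L' : EuclideanSpace ℝ (Fin n) →ₗ[ℝ] EuclideanSpace ℝ (Fin m),
      L' = Matrix.toEuclideanLin A := ⟨_, rfl⟩
  obtain ⟨Ad, hAd⟩ : ∃ Ad' : EuclideanSpace ℝ (Fin m) →ₗ[ℝ] EuclideanSpace ℝ (Fin n),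
      Ad' = LinearMap.adjoint L := ⟨_, rfl⟩
  obtain ⟨nT, hnT⟩ : ∃ t : ℝ,
      t = ‖LinearMap.toContinuousLinearMap (Matrix.toEuclideanLin A)‖ := ⟨_, rfl⟩
  rw [← hnT]
  have hnT0 : 0 ≤ nT := hnT ▸ norm_nonneg _
  have hAdv : ∀ v : EuclideanSpace ℝ (Fin m),
      (WithLp.equiv 2 (Fin n → ℝ)).symm ((Matrix.transpose A).mulVec v) = Ad v := by
    intro v
    have h1 : (WithLp.equiv 2 (Fin n → ℝ)).symm ((Matrix.transpose A).mulVec v)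
        = Matrix.toEuclideanLin (Matrix.transpose A) v := rfl
    rw [h1, hAd, hL, ← Matrix.conjTranspose_eq_transpose_of_trivial,
      Matrix.toEuclideanLin_conjTranspose_eq_adjoint]
  have hAdnorm : ∀ v : EuclideanSpace ℝ (Fin m), ‖Ad v‖ ≤ nT * ‖v‖ := by
    intro v
    have h1 : ‖LinearMap.toContinuousLinearMap Ad‖ = nT := by
      rw [hAd, hL, LinearMap.adjoint_toContinuousLinearMap, hnT]
      exact ContinuousLinearMap.adjoint.norm_map _
    exact h1 ▸ (LinearMap.toContinuousLinearMap Ad).le_opNorm v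
  have hLnorm : ∀ x : EuclideanSpace ℝ (Fin n), ‖L x‖ ≤ nT * ‖x‖ := by
    intro x
    have := (LinearMap.toContinuousLinearMap L).le_opNorm x
    rw [hL] at this
    rw [hL, hnT]
    exact this
  have hAdinner : ∀ (v : EuclideanSpace ℝ (Fin m)) (x : EuclideanSpace ℝ (Fin n)),
      ⟪Ad v, x⟫ = ⟪v, L x⟫ := by
    intro v x
    rw [hAd]
    exact LinearMap.adjoint_inner_left _ _ _
  refine ⟨fun lam => L (X (Ad lam)), fun lam => ?_, ?_⟩
  · -- gradient
    have hphi : (fun lam' : EuclideanSpace ℝ (Fin m) =>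
        ⨆ x, (⟪(WithLp.equiv 2 (Fin n → ℝ)).symm ((Matrix.transpose A).mulVec lam'), x⟫ - f x))
        = fun lam' => ⟪Ad lam', X (Ad lam')⟫ - f (X (Ad lam')) := by
      funext lam'
      rw [hAdv lam', aux_sup hX hσ]
    rw [hphi]
    rw [hasGradientAt_iff_hasFDerivAt, hasFDerivAt_iff_isLittleO_nhds_zero]
    apply Asymptotics.isLittleO_iff.mpr
    intro c hc
    have hK0 : (0:ℝ) ≤ nT^2 / (2*σ) := by positivity
    have hbound : ∀ h : EuclideanSpace ℝ (Fin m),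
        |(⟪Ad (lam + h), X (Ad (lam + h))⟫ - f (X (Ad (lam + h))))
          - (⟪Ad lam, X (Ad lam)⟫ - f (X (Ad lam))) - ⟪L (X (Ad lam)), h⟫|
          ≤ nT^2 / (2*σ) * ‖h‖^2 := by
      intro h
      have hzy : Ad (lam + h) - Ad lam = Ad h := by rw [← map_sub]; congr 1; abel
      have hinner : ⟪L (X (Ad lam)), h⟫ = ⟪Ad (lam + h) - Ad lam, X (Ad lam)⟫ := by
        rw [hzy, hAdinner h (X (Ad lam)), real_inner_comm]
      have hnzy : ‖Ad (lam + h) - Ad lam‖ ≤ nT * ‖h‖ := by rw [hzy]; exact hAdnorm h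
      have hl := aux_low hX hσ (Ad lam) (Ad (lam + h))
      have hu := aux_up hX hσ (Ad lam) (Ad (lam + h))
      have hsq : ‖Ad (lam + h) - Ad lam‖^2 / (2*σ) ≤ nT^2 / (2*σ) * ‖h‖^2 := by
        rw [div_le_iff₀ (by positivity : (0:ℝ) < 2*σ)]
        have hbb : ‖Ad (lam + h) - Ad lam‖^2 ≤ (nT * ‖h‖)^2 := by
          nlinarith [hnzy, norm_nonneg (Ad (lam + h) - Ad lam)]
        calc ‖Ad (lam + h) - Ad lam‖^2 ≤ (nT * ‖h‖)^2 := hbb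
          _ = nT^2/(2*σ) * ‖h‖^2 * (2*σ) := by field_simp
      rw [abs_le, hinner]
      constructor
      · linarith
      · linarith
    have hKc : (0:ℝ) < c / (nT^2/(2*σ) + 1) := by positivity
    filter_upwards [Metric.ball_mem_nhds (0 : EuclideanSpace ℝ (Fin m)) hKc] with h hh
    rw [Metric.mem_ball, dist_zero_right] at hh
    have h1 := hbound h
    have h3 : (nT^2/(2*σ) + 1) * ‖h‖ ≤ c := by
      rw [lt_div_iff₀ (by positivity : (0:ℝ) < nT^2/(2*σ)+1)] at hh
      nlinarith [hh]
    simp only [Real.norm_eq_abs, norm_norm]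
    calc |(⟪Ad (lam + h), X (Ad (lam + h))⟫ - f (X (Ad (lam + h))))
          - (⟪Ad lam, X (Ad lam)⟫ - f (X (Ad lam)))
          - (InnerProductSpace.toDual ℝ (EuclideanSpace ℝ (Fin m)) (L (X (Ad lam)))) h|
        = |(⟪Ad (lam + h), X (Ad (lam + h))⟫ - f (X (Ad (lam + h))))
          - (⟪Ad lam, X (Ad lam)⟫ - f (X (Ad lam))) - ⟪L (X (Ad lam)), h⟫| := by
          rw [InnerProductSpace.toDual_apply_apply]
      _ ≤ nT^2/(2*σ) * ‖h‖^2 := h1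
      _ ≤ c * ‖h‖ := by nlinarith [norm_nonneg h, h3, hK0]
  · -- Lipschitz
    apply LipschitzWith.of_dist_le_mul
    intro μ ν
    have hcoe : (Real.toNNReal (nT^2/σ) : ℝ) = nT^2/σ :=
      Real.coe_toNNReal _ (by positivity)
    rw [dist_eq_norm, dist_eq_norm, hcoe]
    have h1 : L (X (Ad μ)) - L (X (Ad ν)) = L (X (Ad μ) - X (Ad ν)) := (map_sub L _ _).symm
    rw [h1]
    have h2 : ‖L (X (Ad μ) - X (Ad ν))‖ ≤ nT * ‖X (Ad μ) - X (Ad ν)‖ := hLnorm _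
    have h3 : σ * ‖X (Ad μ) - X (Ad ν)‖ ≤ ‖Ad μ - Ad ν‖ := aux_lip hX hσ (Ad ν) (Ad μ)
    have h4 : ‖Ad μ - Ad ν‖ ≤ nT * ‖μ - ν‖ := by
      rw [← map_sub]; exact hAdnorm _
    have h5 : ‖X (Ad μ) - X (Ad ν)‖ ≤ nT * ‖μ - ν‖ / σ := by
      rw [le_div_iff₀ hσ]
      nlinarith [h3, h4]
    calc ‖L (X (Ad μ) - X (Ad ν))‖ ≤ nT * ‖X (Ad μ) - X (Ad ν)‖ := h2
      _ ≤ nT * (nT * ‖μ - ν‖ / σ) := by nlinarith [hnT0, h5]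
      _ = nT^2/σ * ‖μ - ν‖ := by field_simp
end

section
/- Suppose a sequence (λ^k) in ℝ^m satisfies ‖λ^k - λ*‖ ≤ (1-γ)^k (‖λ^0 - λ*‖ + Γ^k) where Γ^k = Σ_{p=1}^{k} (1-γ)^{-p} c_p with c_p ≥ 0 and 0 < γ < 1. If Σ_{p=1}^∞ c_p < ∞, then λ^k → λ*. -/
/-- If `‖λ^k - λ*‖ ≤ (1-γ)^k (‖λ^0 - λ*‖ + Σ_{p=1}^k (1-γ)^{-p} c_p)` with
`0 < γ < 1`, `c_p ≥ 0` and `Σ c_p < ∞`, then `λ^k → λ*`. -/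
theorem stmt_17 (m : ℕ) (γ : ℝ) (hγ0 : 0 < γ) (hγ1 : γ < 1)
    (c : ℕ → ℝ) (hc0 : ∀ p, 0 ≤ c p) (hcsum : Summable c)
    (lam : ℕ → EuclideanSpace ℝ (Fin m)) (lamstar : EuclideanSpace ℝ (Fin m))
    (hbound : ∀ k : ℕ, ‖lam k - lamstar‖ ≤
      (1 - γ) ^ k * (‖lam 0 - lamstar‖ + ∑ p ∈ Finset.Icc 1 k, (1 - γ) ^ (-(p : ℤ)) * c p)) :
    Filter.Tendsto lam Filter.atTop (nhds lamstar) := by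
  set r : ℝ := 1 - γ with hr
  have hr0 : 0 < r := by simp [hr]; linarith
  have hr1 : r < 1 := by simp [hr]; linarith
  set b : ℕ → ℝ := fun p => if p = 0 then ‖lam 0 - lamstar‖ else c p with hb
  have hbsum : Summable b := by
    rw [← summable_nat_add_iff 1]
    exact ((summable_nat_add_iff 1).mpr hcsum).congr (fun n => by simp [hb])
  have hgsum : Summable fun n : ℕ => r ^ n := summable_geometric_of_lt_one hr0.le hr1
  have key : Summable fun n => ‖∑ p ∈ Finset.range (n + 1), b p * r ^ (n - p)‖ := by
    apply summable_norm_sum_mul_range_of_summable_norm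
    · exact hbsum.abs.congr (fun n => (Real.norm_eq_abs _).symm)
    · exact (hgsum.abs.congr (fun n => (Real.norm_eq_abs _).symm))
  have h0 : Filter.Tendsto (fun n => ∑ p ∈ Finset.range (n + 1), b p * r ^ (n - p))
      Filter.atTop (nhds 0) := key.of_norm.tendsto_atTop_zero
  have heq : ∀ n : ℕ, ∑ p ∈ Finset.range (n + 1), b p * r ^ (n - p) =
      r ^ n * (‖lam 0 - lamstar‖ + ∑ p ∈ Finset.Icc 1 n, r ^ (-(p : ℤ)) * c p) := by
    intro n
    rw [Finset.range_eq_Ico, Finset.sum_eq_sum_Ico_succ_bot (by omega)]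
    have h1 : ∑ p ∈ Finset.Ico 1 (n + 1), b p * r ^ (n - p) =
        ∑ p ∈ Finset.Icc 1 n, r ^ n * (r ^ (-(p : ℤ)) * c p) := by
      rw [show Finset.Ico 1 (n+1) = Finset.Icc 1 n by rfl]
      apply Finset.sum_congr rfl
      intro p hp
      simp only [Finset.mem_Icc] at hp
      have hbp : b p = c p := by simp [hb, Nat.one_le_iff_ne_zero.mp hp.1]
      have h2 : (r : ℝ) ^ (n - p) = r ^ n * r ^ (-(p : ℤ)) := by
        rw [← zpow_natCast r (n - p), ← zpow_natCast r n, ← zpow_add₀ hr0.ne']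
        congr 1
        omega
      rw [hbp, h2]; ring
    rw [h1, ← Finset.mul_sum]
    have hb0 : b 0 = ‖lam 0 - lamstar‖ := by simp [hb]
    rw [hb0]
    simp only [Nat.sub_zero]
    ring
  rw [tendsto_iff_norm_sub_tendsto_zero]
  apply squeeze_zero (fun n => norm_nonneg _) (fun n => hbound n)
  simpa only [heq] using h0
end
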